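/- Let K be a φ-simple φ-ring and let R be a K-φ-algebra, i.e., a commutative K-algebra with a ring endomorphism φ_R satisfying φ_R(algebraMap K R a) = algebraMap K R (φ(a)) for all a ∈ K. Then K and R^{φ_R} are linearly disjoint over K^φ: every family (v_i) of elements of the subring R^{φ_R} = {r ∈ R | φ_R(r) = r} that is linearly independent over the subring K^φ = {a ∈ K | φ(a) = a} (acting on R through algebraMap) is linearly independent over K (with R regarded as a K-module via algebraMap). -/

import Mathlib

/-!
A relation `∑ dᵢ vᵢ = 0` among `φ`-constants `vᵢ` is mapped by `φ_R` to the relation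
`∑ φ(dᵢ) vᵢ = 0`, so the coefficients at a fixed index `i` of all relations supported on `s`
form a `φ`-ideal of `K`. If some relation has a nonzero `i`-th coefficient, this ideal is `K`
by `φ`-simplicity, giving a relation `d` with `dᵢ = 1`. Then `φ(d) - d` is a relation supported
on `s \ {i}`, which is trivial by induction on `s`; so `d` has constant coefficients and is
trivial by hypothesis, contradicting `dᵢ = 1`.
-/

/-- A `φ`-ring `R` is `φ`-simple if the zero ideal and the whole ring are its only
`φ`-ideals (ideals `I` with `φ(I) ⊆ I`). -/
def DiffSimple {R : Type*} [CommRing R] (φ : R →+* R) : Prop :=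
  (⊥ : Ideal R) ≠ ⊤ ∧ ∀ I : Ideal R, (∀ x ∈ I, φ x ∈ I) → I = ⊥ ∨ I = ⊤

namespace DiffSimple

variable {K : Type*} [CommRing K] {φ : K →+* K}

theorem nontrivial (h : DiffSimple φ) : Nontrivial K :=
  ⟨⟨0, 1, fun h01 => h.1 <| (Ideal.eq_top_iff_one _).2 (h01 ▸ Ideal.zero_mem ⊥)⟩⟩

theorem eq_top_of_ne_bot (h : DiffSimple φ) {I : Ideal K} (hI : ∀ x ∈ I, φ x ∈ I)
    (hne : I ≠ ⊥) : I = ⊤ :=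
  (h.2 I hI).resolve_left hne

end DiffSimple

section Relations

variable (K : Type*) {R ι : Type*} [CommRing K] [CommRing R] [Algebra K R]

/-- Its kernel is the module of `K`-linear relations among the `vᵢ`, `i ∈ s`. -/
def relationMap (v : ι → R) (s : Finset ι) : (ι → K) →ₗ[K] R :=
  ∑ j ∈ s, (LinearMap.proj j).smulRight (v j)

def relationCoeffIdeal (v : ι → R) (s : Finset ι) (i : ι) : Ideal K :=
  (LinearMap.ker (relationMap K v s)).map (LinearMap.proj i)

variable {K} {v : ι → R} {s : Finset ι}

theorem relationMap_apply (d : ι → K) :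
    relationMap K v s d = ∑ j ∈ s, algebraMap K R (d j) * v j := by
  simp [relationMap, Algebra.smul_def]

theorem mem_relationCoeffIdeal {i : ι} {a : K} :
    a ∈ relationCoeffIdeal K v s i ↔ ∃ d : ι → K, relationMap K v s d = 0 ∧ d i = a := by
  simp [relationCoeffIdeal]

theorem relationMap_erase [DecidableEq ι] {d : ι → K} {i : ι} (hd : d i = 0) :
    relationMap K v (s.erase i) d = relationMap K v s d := by
  simp only [relationMap_apply]
  exact Finset.sum_erase s (by simp [hd])

variable {φ : K →+* K} {φR : R →+* R}

theorem map_relationMap (hcomp : ∀ a : K, φR (algebraMap K R a) = algebraMap K R (φ a))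
    (hv : ∀ i, φR (v i) = v i) (d : ι → K) :
    φR (relationMap K v s d) = relationMap K v s (φ ∘ d) := by
  simp only [relationMap_apply, map_sum, map_mul, hcomp, hv, Function.comp_apply]

theorem map_mem_relationCoeffIdeal
    (hcomp : ∀ a : K, φR (algebraMap K R a) = algebraMap K R (φ a))
    (hv : ∀ i, φR (v i) = v i) {i : ι} {a : K} (ha : a ∈ relationCoeffIdeal K v s i) :
    φ a ∈ relationCoeffIdeal K v s i := by
  obtain ⟨d, hd, rfl⟩ := mem_relationCoeffIdeal.1 ha
  exact mem_relationCoeffIdeal.2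
    ⟨φ ∘ d, by rw [← map_relationMap hcomp hv, hd, map_zero], rfl⟩

theorem relationMap_erase_map_sub [DecidableEq ι]
    (hcomp : ∀ a : K, φR (algebraMap K R a) = algebraMap K R (φ a))
    (hv : ∀ i, φR (v i) = v i) {d : ι → K} (hd : relationMap K v s d = 0) {i : ι}
    (hdi : d i = 1) : relationMap K v (s.erase i) (φ ∘ d - d) = 0 := by
  rw [relationMap_erase (by simp [hdi]), map_sub, ← map_relationMap hcomp hv, hd, map_zero,
    sub_zero]

end Relations

/-- If `K` is a `φ`-simple `φ`-ring and `R` a `K`-`φ`-algebra, then `K` and the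
`φ`-constants of `R` are linearly disjoint over the `φ`-constants of `K`: any family of
`φ`-constants of `R` that is linearly independent over `K^φ` is linearly independent
over `K`. -/
theorem linearly_disjoint_constants_of_diffSimple
    {K R ι : Type*} [CommRing K] [CommRing R] [Algebra K R]
    (φ : K →+* K) (φR : R →+* R) (hsimple : DiffSimple φ)
    (hcomp : ∀ a : K, φR (algebraMap K R a) = algebraMap K R (φ a))
    (v : ι → R) (hv : ∀ i, φR (v i) = v i)
    (hli : ∀ (s : Finset ι) (c : ι → K), (∀ i ∈ s, φ (c i) = c i) →
      ∑ i ∈ s, algebraMap K R (c i) * v i = 0 → ∀ i ∈ s, c i = 0) :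
    ∀ (s : Finset ι) (c : ι → K),
      ∑ i ∈ s, algebraMap K R (c i) * v i = 0 → ∀ i ∈ s, c i = 0 := by
  classical
  have := hsimple.nontrivial
  simp only [← relationMap_apply] at hli ⊢
  intro s
  induction s using Finset.strongInductionOn with
  | _ s ih =>
  intro c hc i hi
  by_contra hci
  have hI : relationCoeffIdeal K v s i = ⊤ :=
    hsimple.eq_top_of_ne_bot (fun _ => map_mem_relationCoeffIdeal hcomp hv) <|
      (Submodule.ne_bot_iff _).2 ⟨c i, mem_relationCoeffIdeal.2 ⟨c, hc, rfl⟩, hci⟩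
  obtain ⟨d, hd, hdi⟩ := mem_relationCoeffIdeal.1 ((Ideal.eq_top_iff_one _).1 hI)
  have hconst : ∀ j ∈ s, φ (d j) = d j := by
    intro j hj
    rcases eq_or_ne j i with rfl | hji
    · rw [hdi, map_one]
    · exact sub_eq_zero.1 <| ih _ (Finset.erase_ssubset hi) _
        (relationMap_erase_map_sub hcomp hv hd hdi) j (Finset.mem_erase.2 ⟨hji, hj⟩)
  exact one_ne_zero (hdi ▸ hli s d hconst hd i hi)
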